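/- Let p ∈ ℂ and let I ⊆ F be the two-sided ideal generated by the five elements x₂x₁ + x₁x₂, x₃x₁ + x₁x₃, x₃x₂ + x₂x₃ + p x₁x₂, x₁², and x₂². Then the images in F/I of the monomials x₁^{e₁} x₂^{e₂} x₃^{a₃}, over all e₁, e₂ ∈ {0, 1} and a₃ ∈ ℕ, form a ℂ-basis of F/I. (For a ≠ −p², this quotient is the Nichols algebra associated to the braiding of type R_{1,2} with t = −1 and b = −p; it has Gelfand–Kirillov dimension 1.) -/

import Mathlib

/-- The free associative unital `ℂ`-algebra on three generators. -/
abbrev F : Type := FreeAlgebra ℂ (Fin 3)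

/-- The generators `x₁ = X 0`, `x₂ = X 1`, `x₃ = X 2`. -/
noncomputable def X (i : Fin 3) : F := FreeAlgebra.ι ℂ i

/-- Generators: `x₂x₁ + x₁x₂`, `x₃x₁ + x₁x₃`, `x₃x₂ + x₂x₃ + p x₁x₂`, `x₁²`, `x₂²`. -/
noncomputable def S (p : ℂ) : Set F :=
  {X 1 * X 0 + X 0 * X 1,
   X 2 * X 0 + X 0 * X 2,
   X 2 * X 1 + X 1 * X 2 + p • (X 0 * X 1),
   X 0 * X 0,
   X 1 * X 1}

/-- The relation whose two-sided-ideal closure is the ideal generated by `S`;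
`RingQuot rel` is the quotient `F/I`. -/
def rel (p : ℂ) : F → F → Prop := fun x y => x ∈ S p ∧ y = 0


/-!
Write `y₀, y₁, y₂` for the images of `x₁, x₂, x₃`. Using the five relations, left multiplication
by each `yᵢ` sends an ordered monomial `y₀^{e₁} y₁^{e₂} y₂^a` to an explicit combination of ordered
monomials (`leftMulCoeffs`), in any algebra where the relations hold. Spanning follows: the span of
the ordered monomials contains `1` and is stable under left multiplication by the generators.
For independence, the same formulas define operators on the free module with basis the exponents;
they satisfy the relations, so `F/I` acts there, and applying a monomial to the basis vector of
`(0, 0, 0)` returns the basis vector of its own exponent.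
-/

open Finsupp

theorem Submodule.eq_top_of_one_mem_of_mul_mem {R A : Type*} [CommSemiring R] [Semiring A]
    [Algebra R A] {s : Set A} (hs : Algebra.adjoin R s = ⊤) (M : Submodule R A) (h1 : 1 ∈ M)
    (hmul : ∀ a ∈ s, ∀ m ∈ M, a * m ∈ M) : M = ⊤ := by
  refine eq_top_iff.2 fun z _ => ?_
  have hz : ∀ m ∈ M, z * m ∈ M := by
    refine Algebra.adjoin_induction (p := fun z _ => ∀ m ∈ M, z * m ∈ M) hmul ?_ ?_ ?_
      (hs ▸ Algebra.mem_top : z ∈ Algebra.adjoin R s)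
    · intro r m hm
      simpa [Algebra.smul_def] using M.smul_mem r hm
    · intro x y _ _ hx hy m hm
      simpa [add_mul] using M.add_mem (hx m hm) (hy m hm)
    · intro x y _ _ hx hy m hm
      simpa [mul_assoc] using hx _ (hy m hm)
  simpa using hz 1 h1

theorem RingQuot.adjoin_range_mkAlgHom_ι {R X : Type*} [CommSemiring R]
    (r : FreeAlgebra R X → FreeAlgebra R X → Prop) :
    Algebra.adjoin R (Set.range fun x => RingQuot.mkAlgHom R r (FreeAlgebra.ι R x)) = ⊤ := by
  rw [Set.range_comp' (RingQuot.mkAlgHom R r) (FreeAlgebra.ι R), Algebra.adjoin_image,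
    FreeAlgebra.adjoin_range_ι, Algebra.map_top, AlgHom.range_eq_top]
  exact RingQuot.mkAlgHom_surjective R r

abbrev Exponent : Type := Fin 2 × Fin 2 × ℕ

def orderedMonomial {M : Type*} [Monoid M] (y : Fin 3 → M) (e : Exponent) : M :=
  y 0 ^ (e.1 : ℕ) * y 1 ^ (e.2.1 : ℕ) * y 2 ^ e.2.2

theorem map_orderedMonomial {M N G : Type*} [Monoid M] [Monoid N] [FunLike G M N]
    [MonoidHomClass G M N] (φ : G) (y : Fin 3 → M) (e : Exponent) :
    φ (orderedMonomial y e) = orderedMonomial (φ ∘ y) e := by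
  simp [orderedMonomial]

section Relations

variable {R A : Type*} [CommRing R] [Ring A] [Algebra R A]

structure R12Relations (p : R) (y : Fin 3 → A) : Prop where
  anticomm_one_zero : y 1 * y 0 + y 0 * y 1 = 0
  anticomm_two_zero : y 2 * y 0 + y 0 * y 2 = 0
  twisted_two_one : y 2 * y 1 + y 1 * y 2 + p • (y 0 * y 1) = 0
  sq_zero : y 0 * y 0 = 0
  sq_one : y 1 * y 1 = 0

variable (R) in
noncomputable def leftMulCoeffs (p : R) : Fin 3 → Exponent → Exponent →₀ R
  | 0, (e₁, e₂, a) => if e₁ = 0 then single (1, e₂, a) 1 else 0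
  | 1, (e₁, e₂, a) => if e₂ = 0 then (-1) ^ (e₁ : ℕ) • single (e₁, 1, a) 1 else 0
  | 2, (e₁, e₂, a) => (-1) ^ ((e₁ : ℕ) + e₂) • single (e₁, e₂, a + 1) 1 +
      if e₁ = 0 ∧ e₂ = 1 then (-p) • single (1, 1, a) 1 else 0

variable (R) in
noncomputable def leftMulOp (p : R) (i : Fin 3) : Module.End R (Exponent →₀ R) :=
  linearCombination R (leftMulCoeffs R p i)

@[simp]
theorem leftMulOp_single (p : R) (i : Fin 3) (e : Exponent) (c : R) :
    leftMulOp R p i (single e c) = c • leftMulCoeffs R p i e :=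
  linearCombination_single R c e

namespace R12Relations

variable {p : R} {y : Fin 3 → A} (h : R12Relations p y)
include h

theorem mul_one_zero_mul (z : A) : y 1 * (y 0 * z) = -(y 0 * (y 1 * z)) := by
  rw [← mul_assoc, eq_neg_of_add_eq_zero_left h.anticomm_one_zero]
  noncomm_ring

theorem mul_two_zero_mul (z : A) : y 2 * (y 0 * z) = -(y 0 * (y 2 * z)) := by
  rw [← mul_assoc, eq_neg_of_add_eq_zero_left h.anticomm_two_zero]
  noncomm_ring

theorem mul_two_one_mul (z : A) :
    y 2 * (y 1 * z) = -(y 1 * (y 2 * z)) - p • (y 0 * (y 1 * z)) := by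
  have h' : y 2 * y 1 + (y 1 * y 2 + p • (y 0 * y 1)) = 0 := by
    rw [← add_assoc, h.twisted_two_one]
  rw [← mul_assoc, eq_neg_of_add_eq_zero_left h']
  noncomm_ring

theorem mul_zero_zero_mul (z : A) : y 0 * (y 0 * z) = 0 := by
  rw [← mul_assoc, h.sq_zero, zero_mul]

theorem mul_one_one_mul (z : A) : y 1 * (y 1 * z) = 0 := by
  rw [← mul_assoc, h.sq_one, zero_mul]

theorem mul_orderedMonomial (i : Fin 3) (e : Exponent) :
    y i * orderedMonomial y e = linearCombination R (orderedMonomial y) (leftMulCoeffs R p i e) := by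
  obtain ⟨e₁, e₂, a⟩ := e
  fin_cases i <;> fin_cases e₁ <;> fin_cases e₂ <;>
    simp [leftMulCoeffs, orderedMonomial, pow_succ', mul_assoc, h.mul_one_zero_mul,
      h.mul_two_zero_mul, h.mul_two_one_mul, h.mul_zero_zero_mul, h.mul_one_one_mul,
      mul_add, mul_neg, sub_eq_add_neg]

theorem mulLeft_comp_linearCombination (i : Fin 3) :
    LinearMap.mulLeft R (y i) ∘ₗ linearCombination R (orderedMonomial y) =
      linearCombination R (orderedMonomial y) ∘ₗ leftMulOp R p i := by
  ext e
  simp [h.mul_orderedMonomial]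

theorem span_orderedMonomial_eq_top (hy : Algebra.adjoin R (Set.range y) = ⊤) :
    Submodule.span R (Set.range (orderedMonomial y)) = ⊤ := by
  refine Submodule.eq_top_of_one_mem_of_mul_mem hy _ ?_ ?_
  · simpa [orderedMonomial] using
      Submodule.subset_span (R := R) (Set.mem_range_self (f := orderedMonomial y) (0, 0, 0))
  · rintro _ ⟨i, rfl⟩ _ hm
    rw [← range_linearCombination] at hm ⊢
    obtain ⟨v, rfl⟩ := hm
    exact ⟨leftMulOp R p i v, (LinearMap.congr_fun (h.mulLeft_comp_linearCombination i) v).symm⟩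

end R12Relations

theorem r12Relations_leftMulOp (p : R) : R12Relations p (leftMulOp R p) := by
  constructor <;> ext ⟨e₁, e₂, a⟩ : 2 <;> fin_cases e₁ <;> fin_cases e₂ <;>
    simp [leftMulCoeffs]

theorem orderedMonomial_leftMulOp_apply (p : R) (e : Exponent) :
    orderedMonomial (leftMulOp R p) e (single (0, 0, 0) 1) = single e 1 := by
  obtain ⟨e₁, e₂, a⟩ := e
  have h₂ : ∀ b : ℕ, (leftMulOp R p 2 ^ b) (single (0, 0, 0) 1) = single (0, 0, b) 1 := by
    intro b
    induction b with
    | zero => rfl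
    | succ b ih => simp [pow_succ', ih, leftMulCoeffs]
  fin_cases e₁ <;> fin_cases e₂ <;> simp [orderedMonomial, h₂, leftMulCoeffs]

end Relations

theorem R12Relations.lift_rel {A : Type*} [Ring A] [Algebra ℂ A] {p : ℂ} {y : Fin 3 → A}
    (h : R12Relations p y) ⦃a b : F⦄ (hab : rel p a b) :
    FreeAlgebra.lift ℂ y a = FreeAlgebra.lift ℂ y b := by
  obtain ⟨ha, rfl⟩ := hab
  simp only [S, Set.mem_insert_iff, Set.mem_singleton_iff] at ha
  rcases ha with rfl | rfl | rfl | rfl | rfl <;>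
    simp only [map_add, map_mul, map_smul, map_zero, X, FreeAlgebra.lift_ι_apply]
  exacts [h.anticomm_one_zero, h.anticomm_two_zero, h.twisted_two_one, h.sq_zero, h.sq_one]

theorem r12Relations_mkAlgHom_X (p : ℂ) :
    R12Relations p fun i => RingQuot.mkAlgHom ℂ (rel p) (X i) := by
  have hS : ∀ s ∈ S p, RingQuot.mkAlgHom ℂ (rel p) s = 0 := fun s hs => by
    simpa using RingQuot.mkAlgHom_rel ℂ (show rel p s 0 from ⟨hs, rfl⟩)
  constructor <;> simp only [← map_mul, ← map_add, ← map_smul] <;> exact hS _ (by simp [S])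

theorem linearIndependent_orderedMonomial_mkAlgHom_X (p : ℂ) :
    LinearIndependent ℂ (orderedMonomial fun i => RingQuot.mkAlgHom ℂ (rel p) (X i)) := by
  let ρ : RingQuot (rel p) →ₐ[ℂ] Module.End ℂ (Exponent →₀ ℂ) :=
    RingQuot.liftAlgHom ℂ ⟨FreeAlgebra.lift ℂ (leftMulOp ℂ p), (r12Relations_leftMulOp p).lift_rel⟩
  have hρ : ρ ∘ (fun i => RingQuot.mkAlgHom ℂ (rel p) (X i)) = leftMulOp ℂ p := by
    funext i
    simp [ρ, X]
  refine LinearIndependent.of_comp (LinearMap.applyₗ (single (0, 0, 0) 1) ∘ₗ ρ.toLinearMap) ?_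
  convert (Finsupp.basisSingleOne : Module.Basis Exponent ℂ _).linearIndependent using 1
  funext e
  simp only [LinearMap.coe_comp, AlgHom.coe_toLinearMap, Function.comp_apply,
    LinearMap.applyₗ_apply_apply, coe_basisSingleOne]
  rw [map_orderedMonomial, hρ, orderedMonomial_leftMulOp_apply]

/-- the images in `F/I` of the monomials `x₁^{e₁} x₂^{e₂} x₃^{a₃}`, `e₁, e₂ ∈ {0,1}`, `a₃ ∈ ℕ`, form a `ℂ`-basis. -/
theorem basis_R12_t_neg_one_b_eq (p : ℂ) :
    LinearIndependent ℂ (fun e : Fin 2 × Fin 2 × ℕ =>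
      RingQuot.mkAlgHom ℂ (rel p) (X 0 ^ (e.1 : ℕ) * X 1 ^ (e.2.1 : ℕ) * X 2 ^ e.2.2)) ∧
    Submodule.span ℂ (Set.range (fun e : Fin 2 × Fin 2 × ℕ =>
      RingQuot.mkAlgHom ℂ (rel p) (X 0 ^ (e.1 : ℕ) * X 1 ^ (e.2.1 : ℕ) * X 2 ^ e.2.2))) = ⊤ := by
  have hmono : (fun e : Exponent =>
      RingQuot.mkAlgHom ℂ (rel p) (X 0 ^ (e.1 : ℕ) * X 1 ^ (e.2.1 : ℕ) * X 2 ^ e.2.2)) =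
      orderedMonomial fun i => RingQuot.mkAlgHom ℂ (rel p) (X i) :=
    funext fun e => map_orderedMonomial _ X e
  rw [hmono]
  exact ⟨linearIndependent_orderedMonomial_mkAlgHom_X p,
    (r12Relations_mkAlgHom_X p).span_orderedMonomial_eq_top
      (RingQuot.adjoin_range_mkAlgHom_ι (rel p))⟩
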